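/- Let (X_n)_{n≥0} be a positive recurrent homogeneous Markov chain with countable state space S and stationary distribution π. Let τ be a stopping time that is finite almost surely and satisfies X_τ = x almost surely, with X_0 = x. Then for all y ∈ S, E[ ∑_{t=0}^{τ−1} 1{X_t = y} | X_0 = x ] = E[τ | X_0 = x] · π_y. -/

import Mathlib

/-!
Let `ν y = ∑ₜ μ {t < τ, X t = y}` be the expected number of visits to `y` before `τ`, so that
`∑ y, ν y = E[τ]`. Since `X 0 = X τ`, shifting the counting window by one step does not change
`ν`; since `{t < τ}` is determined by `X 0, …, X t`, the Markov property turns the shifted count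
into `∑ b, ν b * P b y`. Hence `ν` is an invariant measure of the irreducible stochastic matrix
`P`, and such a measure is either identically `∞` or a multiple of `π`: the positive part of an
invariant real vector of total mass `0` is again invariant and its support is closed under the
transitions of `P`, so by irreducibility it is empty.
-/

open MeasureTheory

/-- `X` is a time-homogeneous Markov chain (indexed from time `0`) with one-step
transition matrix `P`. -/
def IsMarkovChainFrom0 {Ω S : Type*} [Fintype S] [MeasurableSpace Ω]
    (μ : Measure Ω) (X : ℕ → Ω → S) (P : Matrix S S ℝ) : Prop :=
  ∀ (t : ℕ) (s : Fin (t + 1) → S) (y : S),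
    μ {ω | ∀ i : Fin (t + 1), X i ω = s i} ≠ 0 →
    (μ {ω | X (t + 1) ω = y ∧ ∀ i : Fin (t + 1), X i ω = s i}).toReal
      = P (s (Fin.last t)) y * (μ {ω | ∀ i : Fin (t + 1), X i ω = s i}).toReal

open Finset ENNReal

section NullMeasurable

variable {α β : Type*} [MeasurableSpace α] {μ : Measure α}

theorem nullMeasurableSet_of_measure_add_measure_compl_le [IsFiniteMeasure μ] {s : Set α}
    (h : μ s + μ sᶜ ≤ μ Set.univ) : NullMeasurableSet s μ := by
  have hT := measurableSet_toMeasurable μ s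
  have hle : μ sᶜ ≤ μ (toMeasurable μ s)ᶜ := by
    rw [← ENNReal.add_le_add_iff_left (measure_ne_top μ s), ← measure_toMeasurable s,
      measure_add_measure_compl hT]
    exact (measure_toMeasurable s).symm ▸ h
  have hae : (toMeasurable μ s)ᶜ =ᵐ[μ] sᶜ :=
    ae_eq_of_subset_of_measure_ge (Set.compl_subset_compl.2 (subset_toMeasurable μ s)) hle
      hT.compl.nullMeasurableSet (measure_ne_top μ _)
  exact .of_compl (hT.compl.nullMeasurableSet.congr hae)

theorem nullMeasurableSet_preimage_singleton_of_sum_le [Fintype β] [IsFiniteMeasure μ]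
    {f : α → β} (h : ∑ b, μ (f ⁻¹' {b}) ≤ μ Set.univ) (b : β) :
    NullMeasurableSet (f ⁻¹' {b}) μ := by
  classical
  refine nullMeasurableSet_of_measure_add_measure_compl_le ?_
  have hcompl : (f ⁻¹' {b})ᶜ ⊆ ⋃ c ∈ univ.erase b, f ⁻¹' {c} := fun a ha => by
    simpa using ha
  calc μ (f ⁻¹' {b}) + μ (f ⁻¹' {b})ᶜ
      ≤ μ (f ⁻¹' {b}) + ∑ c ∈ univ.erase b, μ (f ⁻¹' {c}) := by
        gcongr; exact (measure_mono hcompl).trans (measure_biUnion_finset_le _ _)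
    _ = ∑ c, μ (f ⁻¹' {c}) := add_sum_erase _ (fun c => μ (f ⁻¹' {c})) (mem_univ b)
    _ ≤ μ Set.univ := h

theorem nullMeasurableSet_preimage_of_preimage_singleton [Countable β] {f : α → β}
    (hf : ∀ b, NullMeasurableSet (f ⁻¹' {b}) μ) (s : Set β) :
    NullMeasurableSet (f ⁻¹' s) μ := by
  rw [← Set.biUnion_preimage_singleton]
  exact .biUnion s.to_countable fun b _ => hf b

theorem nullMeasurableSet_preimage_singleton_of_ae_eq_const {f : α → β} {c : β}
    (h : ∀ᵐ a ∂μ, f a = c) (b : β) : NullMeasurableSet (f ⁻¹' {b}) μ := by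
  by_cases hb : c = b
  · subst hb
    exact .of_compl (.of_null (measure_mono_null (fun a ha => ha) (ae_iff.1 h)))
  · exact .of_null (measure_mono_null
      (fun a (ha : f a = b) (hc : f a = c) => hb (hc.symm.trans ha)) (ae_iff.1 h))

theorem sum_measure_preimage_singleton₀ (s : Finset β) {f : α → β}
    (hf : ∀ b ∈ s, NullMeasurableSet (f ⁻¹' {b}) μ) :
    ∑ b ∈ s, μ (f ⁻¹' {b}) = μ (f ⁻¹' ↑s) := by
  rw [← measure_biUnion_finset₀ (Set.pairwiseDisjoint_fiber f s).aedisjoint hf,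
    Finset.set_biUnion_preimage_singleton]

theorem sum_measure_inter_preimage_singleton₀ [Fintype β] {f : α → β}
    (hf : ∀ b, NullMeasurableSet (f ⁻¹' {b}) μ) {s : Set α} (hs : NullMeasurableSet s μ) :
    ∑ b, μ (s ∩ f ⁻¹' {b}) = μ s := by
  rw [← measure_biUnion_finset₀ (fun b _ c _ hbc => (((Set.disjoint_singleton.2 hbc).preimage
    f).mono Set.inter_subset_right Set.inter_subset_right).aedisjoint) fun b _ => hs.inter (hf b)]
  congr 1
  ext a
  simp

end NullMeasurable

theorem Finset.sum_range_succ_eq_sum_range_of_eq {M : Type*} [AddCommMonoid M] (c : ℕ → M)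
    {n : ℕ} (h : c n = c 0) : ∑ t ∈ range n, c (t + 1) = ∑ t ∈ range n, c t := by
  cases n with
  | zero => rfl
  | succ n => rw [sum_range_succ, sum_range_succ', h, add_comm]

theorem lintegral_sum_range_ite {Ω : Type*} [MeasurableSpace Ω] {μ : Measure Ω} (τ : Ω → ℕ)
    (p : ℕ → Ω → Prop) [∀ t, DecidablePred (p t)]
    (hp : ∀ t, NullMeasurableSet {ω | t < τ ω ∧ p t ω} μ) :
    ∫⁻ ω, ∑ t ∈ range (τ ω), (if p t ω then 1 else 0) ∂μ = ∑' t, μ {ω | t < τ ω ∧ p t ω} := by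
  have hpt : ∀ ω, ∑ t ∈ range (τ ω), (if p t ω then (1 : ℝ≥0∞) else 0)
      = ∑' t, {ω | t < τ ω ∧ p t ω}.indicator 1 ω := fun ω => by
    rw [tsum_eq_sum (s := range (τ ω))
      fun t ht => Set.indicator_of_notMem (fun h => ht (mem_range.2 h.1)) _]
    refine sum_congr rfl fun t ht => ?_
    simp [Set.indicator_apply, mem_range.1 ht]
  simp_rw [hpt]
  rw [lintegral_tsum (f := fun t => {ω | t < τ ω ∧ p t ω}.indicator 1)
    fun t => aemeasurable_one.indicator₀ (hp t)]
  simp_rw [lintegral_indicator_one₀ (hp _)]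

namespace Matrix

theorem IsIrreducible.mem_of_pos_imp_mem {n R : Type*} [Ring R] [LinearOrder R]
    {A : Matrix n n R} (hA : A.IsIrreducible) {T : Set n}
    (hT : ∀ i j, i ∈ T → 0 < A i j → j ∈ T) {i : n} (hi : i ∈ T) (j : n) : j ∈ T := by
  let := toQuiver A
  obtain ⟨p, -⟩ := hA.connected i j
  induction p with
  | nil => exact hi
  | cons _ e ih => exact hT _ _ ih e.down

variable {n : Type*} [Fintype n] [DecidableEq n] {P : Matrix n n ℝ}

theorem IsIrreducible.eq_zero_of_vecMul_eq_self (hP : P ∈ rowStochastic ℝ n)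
    (hirr : P.IsIrreducible) {g : n → ℝ} (hg : g ᵥ* P = g) (hsum : ∑ i, g i = 0) : g = 0 := by
  set u : n → ℝ := fun i => max (g i) 0
  have hle : ∀ j, u j ≤ (u ᵥ* P) j := fun j => by
    refine max_le ?_ (nonneg_vecMul_of_mem_rowStochastic hP (fun i => le_max_right _ _) j)
    conv_lhs => rw [← hg]
    exact sum_le_sum fun i _ => mul_le_mul_of_nonneg_right (le_max_left _ _) (hirr.nonneg i j)
  have hsum_u : ∑ j, u j = ∑ j, (u ᵥ* P) j := by
    rw [← dotProduct_one, ← dotProduct_one, ← dotProduct_mulVec, hP.2]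
  have hu : u ᵥ* P = u := funext fun j =>
    ((sum_eq_sum_iff_of_le fun j _ => hle j).1 hsum_u j (mem_univ j)).symm
  have hnonpos : ∀ i, g i ≤ 0 := by
    by_contra! ⟨i, hi⟩
    have hpos : ∀ j, 0 < u j := hirr.mem_of_pos_imp_mem (T := {j | 0 < u j})
      (fun i j hi hij => by
        show 0 < u j
        rw [← hu]
        exact (mul_pos hi hij).trans_le (single_le_sum (f := fun k => u k * P k j)
          (fun k _ => mul_nonneg (le_max_right _ _) (hirr.nonneg k j)) (mem_univ i)))
      (lt_max_of_lt_left hi)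
    have : 0 < ∑ j, g j := sum_pos (fun j _ => by simpa [u] using hpos j) ⟨i, mem_univ i⟩
    exact this.ne' hsum
  funext i
  exact (sum_eq_zero_iff_of_nonpos fun i _ => hnonpos i).1 hsum i (mem_univ i)

theorem IsIrreducible.eq_sum_smul_of_vecMul_eq_self (hP : P ∈ rowStochastic ℝ n)
    (hirr : P.IsIrreducible) {π : n → ℝ} (hπ : ∑ i, π i = 1) (hπP : π ᵥ* P = π)
    {v : n → ℝ} (hv : v ᵥ* P = v) : v = (∑ i, v i) • π :=
  sub_eq_zero.1 <| hirr.eq_zero_of_vecMul_eq_self hP (by rw [sub_vecMul, smul_vecMul, hv, hπP])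
    (by simp [sum_sub_distrib, ← mul_sum, hπ])

theorem IsIrreducible.eq_sum_mul_of_invariant (hP : P ∈ rowStochastic ℝ n)
    (hirr : P.IsIrreducible) {π : n → ℝ} (hπpos : ∀ i, 0 < π i) (hπ : ∑ i, π i = 1)
    (hπP : π ᵥ* P = π) {ν : n → ℝ≥0∞} (hν : ∀ j, ∑ i, ν i * ENNReal.ofReal (P i j) = ν j)
    (j : n) : ν j = (∑ i, ν i) * ENNReal.ofReal (π j) := by
  by_cases htop : ∃ i, ν i = ⊤
  · obtain ⟨i, hi⟩ := htop
    have hall : ∀ j, ν j = ⊤ := hirr.mem_of_pos_imp_mem (T := {j | ν j = ⊤})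
      (fun i j hi hij => by
        show ν j = ⊤
        rw [← hν j, eq_top_iff]
        calc ⊤ = ν i * ENNReal.ofReal (P i j) := by
                rw [hi, top_mul (ofReal_pos.2 hij).ne']
          _ ≤ _ := single_le_sum (f := fun k => ν k * ENNReal.ofReal (P k j))
                (fun _ _ => zero_le) (mem_univ i)) hi
    rw [hall j, sum_eq_top.2 ⟨j, mem_univ j, hall j⟩, top_mul (ofReal_pos.2 (hπpos j)).ne']
  · push Not at htop
    have hv : (fun i => (ν i).toReal) ᵥ* P = fun i => (ν i).toReal := funext fun j => by
      rw [← hν j, toReal_sum fun i _ => mul_ne_top (htop i) ofReal_ne_top]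
      simp [vecMul, dotProduct, toReal_ofReal (hirr.nonneg _ _)]
    have hj := congrFun (hirr.eq_sum_smul_of_vecMul_eq_self hP hπ hπP hv) j
    rw [Pi.smul_apply, smul_eq_mul, ← toReal_sum fun i _ => htop i] at hj
    rw [← ofReal_toReal (htop j), hj, ofReal_mul toReal_nonneg,
      ofReal_toReal (sum_ne_top.2 fun i _ => htop i)]

end Matrix

section MarkovChain

variable {Ω S : Type*} {X : ℕ → Ω → S}

def pathUpTo (X : ℕ → Ω → S) (t : ℕ) (ω : Ω) : Fin (t + 1) → S := fun i => X i ω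

theorem pathUpTo_succ (t : ℕ) (ω : Ω) :
    pathUpTo X (t + 1) ω = Fin.snoc (pathUpTo X t ω) (X (t + 1) ω) := by
  ext i
  induction i using Fin.lastCases <;> simp [pathUpTo]

theorem pathUpTo_preimage_snoc (t : ℕ) (s : Fin (t + 1) → S) (y : S) :
    pathUpTo X (t + 1) ⁻¹' {Fin.snoc s y} = pathUpTo X t ⁻¹' {s} ∩ X (t + 1) ⁻¹' {y} := by
  ext ω
  simp [pathUpTo_succ, Fin.snoc_inj]

variable [MeasurableSpace Ω] {μ : Measure Ω}

noncomputable def expectedVisits (μ : Measure Ω) (X : ℕ → Ω → S) (τ : Ω → ℕ) (y : S) : ℝ≥0∞ :=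
  ∑' t, μ {ω | t < τ ω ∧ X t ω = y}

theorem lintegral_eq_sum_expectedVisits [Fintype S] {τ : Ω → ℕ}
    (hX : ∀ t y, NullMeasurableSet (X t ⁻¹' {y}) μ)
    (hτ : ∀ t, NullMeasurableSet {ω | t < τ ω} μ) :
    ∫⁻ ω, (τ ω : ℝ≥0∞) ∂μ = ∑ y, expectedVisits μ X τ y := by
  have h := lintegral_sum_range_ite (μ := μ) τ (fun _ _ => True) (by simpa using hτ)
  simp only [if_true, sum_const, card_range, nsmul_eq_mul, mul_one, and_true] at h
  simp_rw [h, expectedVisits]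
  rw [← Summable.tsum_finsetSum fun _ _ => ENNReal.summable]
  exact tsum_congr fun t => (sum_measure_inter_preimage_singleton₀ (hX t) (hτ t)).symm

variable [Fintype S] {P : Matrix S S ℝ}

namespace IsMarkovChainFrom0

theorem measure_pathUpTo_preimage_singleton_inter [IsFiniteMeasure μ]
    (hX : IsMarkovChainFrom0 μ X P) (hP : ∀ a b, 0 ≤ P a b) (t : ℕ) (s : Fin (t + 1) → S) (y : S) :
    μ (pathUpTo X t ⁻¹' {s} ∩ X (t + 1) ⁻¹' {y})
      = μ (pathUpTo X t ⁻¹' {s}) * ENNReal.ofReal (P (s (Fin.last t)) y) := by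
  have hcyl : pathUpTo X t ⁻¹' {s} = {ω | ∀ i : Fin (t + 1), X i ω = s i} := by
    ext ω
    simp [pathUpTo, funext_iff]
  have hstep : pathUpTo X t ⁻¹' {s} ∩ X (t + 1) ⁻¹' {y}
      = {ω | X (t + 1) ω = y ∧ ∀ i : Fin (t + 1), X i ω = s i} := by
    ext ω
    simp [pathUpTo, funext_iff, and_comm]
  rcases eq_or_ne (μ (pathUpTo X t ⁻¹' {s})) 0 with h | h
  · rw [h, zero_mul]
    exact measure_mono_null Set.inter_subset_left h
  · rw [hstep, ← ofReal_toReal (measure_ne_top μ _), hX t s y (hcyl ▸ h), ofReal_mul (hP _ _),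
      ← hcyl, ofReal_toReal (measure_ne_top μ _), mul_comm]

theorem sum_measure_pathUpTo_preimage_singleton_succ [DecidableEq S] [IsFiniteMeasure μ]
    (hX : IsMarkovChainFrom0 μ X P) (hP : P ∈ Matrix.rowStochastic ℝ S) (t : ℕ) :
    ∑ s, μ (pathUpTo X (t + 1) ⁻¹' {s}) = ∑ s, μ (pathUpTo X t ⁻¹' {s}) := by
  rw [← (Fin.snocEquiv fun _ => S).sum_comp, Fintype.sum_prod_type_right]
  refine sum_congr rfl fun s _ => ?_
  have hrow : ∑ y, ENNReal.ofReal (P (s (Fin.last t)) y) = 1 := by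
    rw [← ofReal_sum_of_nonneg fun y _ => hP.1 _ _,
      Matrix.sum_row_of_mem_rowStochastic hP, ofReal_one]
  simp only [Fin.snocEquiv, Equiv.coe_fn_mk]
  simp_rw [pathUpTo_preimage_snoc, measure_pathUpTo_preimage_singleton_inter hX hP.1,
    ← mul_sum, hrow, mul_one]

-- `X` is not assumed measurable: the cylinders are null-measurable because their masses add up
-- to `μ univ`.
theorem nullMeasurableSet_pathUpTo_preimage_singleton [DecidableEq S] [IsFiniteMeasure μ]
    (hX : IsMarkovChainFrom0 μ X P) (hP : P ∈ Matrix.rowStochastic ℝ S)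
    (h0 : ∀ a, NullMeasurableSet (X 0 ⁻¹' {a}) μ) :
    ∀ (t : ℕ) (s : Fin (t + 1) → S), NullMeasurableSet (pathUpTo X t ⁻¹' {s}) μ
  | 0, s => by
    have : pathUpTo X 0 ⁻¹' {s} = X 0 ⁻¹' {s 0} := by
      ext ω
      simp [pathUpTo, funext_iff, Fin.forall_fin_one]
    exact this ▸ h0 _
  | t + 1, _ => by
    have ih := nullMeasurableSet_pathUpTo_preimage_singleton hX hP h0 t
    refine nullMeasurableSet_preimage_singleton_of_sum_le (le_of_eq ?_) _
    rw [sum_measure_pathUpTo_preimage_singleton_succ hX hP,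
      sum_measure_preimage_singleton₀ univ fun s _ => ih s, coe_univ, Set.preimage_univ]

theorem nullMeasurableSet_pathUpTo_preimage [DecidableEq S] [IsFiniteMeasure μ]
    (hX : IsMarkovChainFrom0 μ X P) (hP : P ∈ Matrix.rowStochastic ℝ S)
    (h0 : ∀ a, NullMeasurableSet (X 0 ⁻¹' {a}) μ) (t : ℕ) (A : Set (Fin (t + 1) → S)) :
    NullMeasurableSet (pathUpTo X t ⁻¹' A) μ :=
  nullMeasurableSet_preimage_of_preimage_singleton
    (nullMeasurableSet_pathUpTo_preimage_singleton hX hP h0 t) A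

theorem nullMeasurableSet_preimage_singleton [DecidableEq S] [IsFiniteMeasure μ]
    (hX : IsMarkovChainFrom0 μ X P) (hP : P ∈ Matrix.rowStochastic ℝ S)
    (h0 : ∀ a, NullMeasurableSet (X 0 ⁻¹' {a}) μ) (t : ℕ) (y : S) :
    NullMeasurableSet (X t ⁻¹' {y}) μ :=
  nullMeasurableSet_pathUpTo_preimage hX hP h0 t {s | s (Fin.last t) = y}

theorem measure_pathUpTo_preimage_inter_succ [DecidableEq S] [IsFiniteMeasure μ]
    (hX : IsMarkovChainFrom0 μ X P) (hP : P ∈ Matrix.rowStochastic ℝ S)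
    (h0 : ∀ a, NullMeasurableSet (X 0 ⁻¹' {a}) μ) (t : ℕ) (A : Set (Fin (t + 1) → S)) (y : S) :
    μ (pathUpTo X t ⁻¹' A ∩ X (t + 1) ⁻¹' {y})
      = ∑ b, μ (pathUpTo X t ⁻¹' A ∩ X t ⁻¹' {b}) * ENNReal.ofReal (P b y) := by
  classical
  obtain ⟨A, rfl⟩ : ∃ A' : Finset _, ↑A' = A := ⟨A.toFinite.toFinset, by simp⟩
  have hnull := nullMeasurableSet_pathUpTo_preimage hX hP h0
  let F : Ω → (Fin (t + 1) → S) × S := fun ω => (pathUpTo X t ω, X (t + 1) ω)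
  have hF : ∀ p, F ⁻¹' {p} = pathUpTo X (t + 1) ⁻¹' {Fin.snoc p.1 p.2} := fun p => by
    rw [pathUpTo_preimage_snoc]
    ext ω
    simp [F, Prod.ext_iff]
  calc μ (pathUpTo X t ⁻¹' A ∩ X (t + 1) ⁻¹' {y})
      = μ (F ⁻¹' ↑(A ×ˢ {y})) := by congr 1; ext ω; simp [F, eq_comm]
    _ = ∑ s ∈ A, μ (pathUpTo X t ⁻¹' {s}) * ENNReal.ofReal (P (s (Fin.last t)) y) := by
      rw [← sum_measure_preimage_singleton₀ _ fun p _ => hF p ▸ hnull _ _, sum_product]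
      refine sum_congr rfl fun s _ => ?_
      rw [sum_singleton, hF, pathUpTo_preimage_snoc,
        measure_pathUpTo_preimage_singleton_inter hX hP.1]
    _ = ∑ b, ∑ s ∈ A with s (Fin.last t) = b, μ (pathUpTo X t ⁻¹' {s})
          * ENNReal.ofReal (P (s (Fin.last t)) y) := (sum_fiberwise _ _ _).symm
    _ = ∑ b, μ (pathUpTo X t ⁻¹' A ∩ X t ⁻¹' {b}) * ENNReal.ofReal (P b y) := by
      refine sum_congr rfl fun b _ => ?_
      have hset : pathUpTo X t ⁻¹' A ∩ X t ⁻¹' {b}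
          = pathUpTo X t ⁻¹' ↑{s ∈ A | s (Fin.last t) = b} := by
        ext ω
        simp [pathUpTo]
      rw [hset, ← sum_measure_preimage_singleton₀ _ fun s _ => hnull t _, sum_mul]
      exact sum_congr rfl fun s hs => by rw [(mem_filter.1 hs).2]

theorem expectedVisits_invariant [DecidableEq S] [IsFiniteMeasure μ]
    (hX : IsMarkovChainFrom0 μ X P) (hP : P ∈ Matrix.rowStochastic ℝ S)
    (h0 : ∀ a, NullMeasurableSet (X 0 ⁻¹' {a}) μ) {τ : Ω → ℕ}
    (hτ : ∀ t, ∃ A : Set (Fin (t + 1) → S), pathUpTo X t ⁻¹' A = {ω | t < τ ω})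
    (hcycle : ∀ᵐ ω ∂μ, X (τ ω) ω = X 0 ω) (y : S) :
    ∑ b, expectedVisits μ X τ b * ENNReal.ofReal (P b y) = expectedVisits μ X τ y := by
  choose A hA using hτ
  have hlt : ∀ t, NullMeasurableSet {ω | t < τ ω} μ := fun t =>
    hA t ▸ nullMeasurableSet_pathUpTo_preimage hX hP h0 t (A t)
  have hvisit := nullMeasurableSet_preimage_singleton hX hP h0
  calc ∑ b, expectedVisits μ X τ b * ENNReal.ofReal (P b y)
      = ∑' t, ∑ b, μ {ω | t < τ ω ∧ X t ω = b} * ENNReal.ofReal (P b y) := by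
        simp_rw [expectedVisits, ← ENNReal.tsum_mul_right]
        exact (Summable.tsum_finsetSum fun _ _ => ENNReal.summable).symm
    _ = ∑' t, μ {ω | t < τ ω ∧ X (t + 1) ω = y} := tsum_congr fun t => by
        have h := measure_pathUpTo_preimage_inter_succ hX hP h0 t (A t) y
        rw [hA t] at h
        exact h.symm
    _ = ∫⁻ ω, ∑ t ∈ range (τ ω), (if X (t + 1) ω = y then 1 else 0) ∂μ :=
        (lintegral_sum_range_ite τ (fun t ω => X (t + 1) ω = y) fun t =>
          (hlt t).inter (hvisit (t + 1) y)).symm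
    _ = ∫⁻ ω, ∑ t ∈ range (τ ω), (if X t ω = y then 1 else 0) ∂μ :=
        lintegral_congr_ae <| hcycle.mono fun ω hω =>
          sum_range_succ_eq_sum_range_of_eq (fun t => if X t ω = y then 1 else 0) (by simp [hω])
    _ = expectedVisits μ X τ y :=
        lintegral_sum_range_ite τ (fun t ω => X t ω = y) fun t => (hlt t).inter (hvisit t y)

end IsMarkovChainFrom0

end MarkovChain

theorem stmt_5_general {Ω S : Type*} [Fintype S] [DecidableEq S] [MeasurableSpace Ω]
    (μ : Measure Ω) [IsProbabilityMeasure μ]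
    (X : ℕ → Ω → S) (P : Matrix S S ℝ) (π : S → ℝ) (x : S)
    (hchain : IsMarkovChainFrom0 μ X P)
    (hP0 : ∀ a b, 0 ≤ P a b) (hProw : ∀ a, ∑ b, P a b = 1)
    (hrec : ∀ a b : S, ∃ n : ℕ, 0 < n ∧ 0 < (P ^ n) a b)  -- positive recurrence (finite irreducible chain)
    (hπpos : ∀ a, 0 < π a) (hπsum : ∑ a, π a = 1)
    (hstat : ∀ b, ∑ a, π a * P a b = π b)
    (τ : Ω → ℕ)
    (hτstop : ∀ n : ℕ, MeasurableSet[MeasurableSpace.comap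
        (fun ω => fun i : Fin (n + 1) => X i ω) ⊤] {ω | τ ω ≤ n})
    (hstart : ∀ᵐ ω ∂μ, X 0 ω = x)
    (hend : ∀ᵐ ω ∂μ, X (τ ω) ω = x) :
    ∀ y : S,
      (∫⁻ ω, (∑ t ∈ Finset.range (τ ω), if X t ω = y then (1 : ENNReal) else 0) ∂μ)
        = (∫⁻ ω, (τ ω : ENNReal) ∂μ) * ENNReal.ofReal (π y) := by
  have hP : P ∈ Matrix.rowStochastic ℝ S := Matrix.mem_rowStochastic_iff_sum.2 ⟨hP0, hProw⟩
  have hirr : P.IsIrreducible := (Matrix.isIrreducible_iff_exists_pow_pos hP0).2 hrec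
  have h0 := nullMeasurableSet_preimage_singleton_of_ae_eq_const hstart
  have hτ : ∀ t, ∃ A : Set (Fin (t + 1) → S), pathUpTo X t ⁻¹' A = {ω | t < τ ω} := fun t => by
    obtain ⟨A, -, hA⟩ := hτstop t
    change pathUpTo X t ⁻¹' A = _ at hA
    refine ⟨Aᶜ, ?_⟩
    rw [Set.preimage_compl, hA]
    ext ω
    simp
  have hlt : ∀ t, NullMeasurableSet {ω | t < τ ω} μ := fun t => by
    obtain ⟨A, hA⟩ := hτ t
    exact hA ▸ IsMarkovChainFrom0.nullMeasurableSet_pathUpTo_preimage hchain hP h0 t A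
  have hvisit := IsMarkovChainFrom0.nullMeasurableSet_preimage_singleton hchain hP h0
  have hcycle : ∀ᵐ ω ∂μ, X (τ ω) ω = X 0 ω := by
    filter_upwards [hstart, hend] with ω hω0 hωτ
    rw [hω0, hωτ]
  intro y
  rw [lintegral_sum_range_ite τ (fun t ω => X t ω = y) fun t => (hlt t).inter (hvisit t y),
    lintegral_eq_sum_expectedVisits hvisit hlt]
  exact hirr.eq_sum_mul_of_invariant hP hπpos hπsum (funext hstat)
    (IsMarkovChainFrom0.expectedVisits_invariant hchain hP h0 hτ hcycle) y

theorem stmt_5 {Ω S : Type*} [Fintype S] [DecidableEq S] [Nonempty S] [MeasurableSpace Ω]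
    (μ : Measure Ω) [IsProbabilityMeasure μ]
    (X : ℕ → Ω → S) (P : Matrix S S ℝ) (π : S → ℝ) (x : S)
    (hchain : IsMarkovChainFrom0 μ X P)
    (hP0 : ∀ a b, 0 ≤ P a b) (hProw : ∀ a, ∑ b, P a b = 1)
    (hrec : ∀ a b : S, ∃ n : ℕ, 0 < n ∧ 0 < (P ^ n) a b)  -- positive recurrence (finite irreducible chain)
    (hπpos : ∀ a, 0 < π a) (hπsum : ∑ a, π a = 1)
    (hstat : ∀ b, ∑ a, π a * P a b = π b)
    (τ : Ω → ℕ)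
    (hτstop : ∀ n : ℕ, MeasurableSet[MeasurableSpace.comap
        (fun ω => fun i : Fin (n + 1) => X i ω) ⊤] {ω | τ ω ≤ n})
    (hstart : ∀ᵐ ω ∂μ, X 0 ω = x)
    (hend : ∀ᵐ ω ∂μ, X (τ ω) ω = x) :
    ∀ y : S,
      (∫⁻ ω, (∑ t ∈ Finset.range (τ ω), if X t ω = y then (1 : ENNReal) else 0) ∂μ)
        = (∫⁻ ω, (τ ω : ENNReal) ∂μ) * ENNReal.ofReal (π y) :=
  stmt_5_general μ X P π x hchain hP0 hProw hrec hπpos hπsum hstat τ hτstop hstart hend
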